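/- arXiv:2605.21860 — 5 statements merged into one kernel-verified Lean document; each statement's English description precedes it below -/
import Mathlib

section
/- Let A and B be independent uniformly random k-subsets of {1,…,n} and let H = |A ∩ B|. Then for every λ ≥ 0, E[exp(λ(H - k²/n))] ≤ exp((k²/n)(e^λ - 1 - λ)). -/
/-!
Write `e^(λH) = (1 + x)^H` with `x = e^λ - 1` and expand binomially. Since `C(H, s)` counts the
`s`-sets `R ⊆ A ∩ B`, double counting gives `∑_{A,B} C(|A ∩ B|, s) = C(n, s) C(n - s, k - s)²`,
i.e. `E C(H, s) = C(n, s) p² = C(k, s) p` with `p = P(R ⊆ A) = C(n - s, k - s) / C(n, k)`.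
As `C(k, s) ≤ k^s / s!` and `p ≤ (k/n)^s`, this is at most `μ^s / s!` for `μ = k²/n`, so
`E e^(λH) ≤ ∑_s (μx)^s / s! ≤ e^(μx)`.
-/

open Finset

theorem Nat.pow_mul_choose_sub_le_pow_mul_choose {n k s : ℕ} (hk : k ≤ n) (hs : s ≤ k) :
    n ^ s * (n - s).choose (k - s) ≤ k ^ s * n.choose k := by
  induction s with
  | zero => simp
  | succ s ih =>
    obtain ⟨m, hm⟩ : ∃ m, n - s = m + 1 := ⟨n - s - 1, by omega⟩
    obtain ⟨j, hj⟩ : ∃ j, k - s = j + 1 := ⟨k - s - 1, by omega⟩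
    have hpascal :
        (n - s) * (n - (s + 1)).choose (k - (s + 1)) = (n - s).choose (k - s) * (k - s) := by
      rw [hm, hj, show n - (s + 1) = m by omega, show k - (s + 1) = j by omega]
      exact Nat.add_one_mul_choose_eq m j
    have hratio : n * (k - s) ≤ k * (n - s) := by
      rw [Nat.mul_sub, Nat.mul_sub, Nat.mul_comm n k]
      exact Nat.sub_le_sub_left (Nat.mul_le_mul_right s hk) _
    refine Nat.le_of_mul_le_mul_left ?_ (show 0 < n - s by omega)
    calc (n - s) * (n ^ (s + 1) * (n - (s + 1)).choose (k - (s + 1)))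
        = n * (k - s) * (n ^ s * (n - s).choose (k - s)) := by rw [pow_succ]; grind
      _ ≤ k * (n - s) * (k ^ s * n.choose k) := Nat.mul_le_mul hratio (ih (by omega))
      _ = (n - s) * (k ^ (s + 1) * n.choose k) := by ring

theorem Nat.choose_mul_choose_sub_sq_le {n k s : ℕ} (hn : 0 < n) (hk : k ≤ n) (hs : s ≤ k) :
    (n.choose s * (n - s).choose (k - s) ^ 2 : ℝ) ≤
      n.choose k ^ 2 * ((k : ℝ) ^ 2 / n) ^ s / s.factorial := by
  have hprob : ((n - s).choose (k - s) : ℝ) ≤ k ^ s * n.choose k / n ^ s := by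
    rw [le_div_iff₀' (by positivity)]
    exact_mod_cast Nat.pow_mul_choose_sub_le_pow_mul_choose hk hs
  have hsplit : (n.choose s * (n - s).choose (k - s) ^ 2 : ℝ) =
      n.choose k * k.choose s * (n - s).choose (k - s) := by
    rw [sq, ← mul_assoc]
    exact_mod_cast congrArg (· * (n - s).choose (k - s)) (Nat.choose_mul hs).symm
  calc (n.choose s * (n - s).choose (k - s) ^ 2 : ℝ)
      = n.choose k * k.choose s * (n - s).choose (k - s) := hsplit
    _ ≤ n.choose k * (k ^ s / s.factorial) * (k ^ s * n.choose k / n ^ s) := by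
      gcongr
      exact Nat.choose_le_pow_div s k
    _ = n.choose k ^ 2 * ((k : ℝ) ^ 2 / n) ^ s / s.factorial := by
      rw [div_pow, ← pow_mul, mul_comm 2 s, pow_mul']
      ring

theorem add_one_pow_eq_sum_range_choose {R : Type*} [CommSemiring R] (x : R) {m k : ℕ}
    (hm : m ≤ k) : (x + 1) ^ m = ∑ s ∈ range (k + 1), (m.choose s : R) * x ^ s := by
  rw [add_pow]
  refine sum_subset_zero_on_sdiff (range_subset_range.mpr (by omega)) (fun s hs => ?_)
    fun s _ => by ring
  rw [Nat.choose_eq_zero_of_lt (by simp at hs; omega), Nat.cast_zero, zero_mul]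

theorem Finset.sum_sum_choose_card_inter {α : Type*} [DecidableEq α] (t : Finset α) {k s : ℕ}
    (hs : s ≤ k) :
    ∑ A ∈ t.powersetCard k, ∑ B ∈ t.powersetCard k, (#(A ∩ B)).choose s =
      (#t).choose s * (#t - s).choose (k - s) ^ 2 := by
  have hsubsets : ∀ A ∈ t.powersetCard k, ∀ B, (#(A ∩ B)).choose s =
      ∑ R ∈ t.powersetCard s, (if R ⊆ A then 1 else 0) * (if R ⊆ B then 1 else 0) := by
    intro A hA B
    simp_rw [ite_zero_mul_ite_zero, mul_one, ← card_filter, ← subset_inter_iff,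
      ← card_powersetCard s (A ∩ B)]
    congr 1
    ext R
    have hAt := (mem_powersetCard.mp hA).1
    simp only [mem_powersetCard, mem_filter]
    exact ⟨fun ⟨hR, hcard⟩ => ⟨⟨hR.trans (inter_subset_left.trans hAt), hcard⟩, hR⟩,
      fun ⟨⟨_, hcard⟩, hR⟩ => ⟨hR, hcard⟩⟩
  have hsupersets : ∀ R ∈ t.powersetCard s,
      ∑ A ∈ t.powersetCard k, (if R ⊆ A then 1 else 0) = (#t - s).choose (k - s) := by
    intro R hR
    obtain ⟨hRt, rfl⟩ := mem_powersetCard.mp hR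
    rw [← card_filter]
    exact card_filter_powersetCard_subset R t k hRt hs
  calc ∑ A ∈ t.powersetCard k, ∑ B ∈ t.powersetCard k, (#(A ∩ B)).choose s
      = ∑ A ∈ t.powersetCard k, ∑ B ∈ t.powersetCard k, ∑ R ∈ t.powersetCard s,
          (if R ⊆ A then 1 else 0) * (if R ⊆ B then 1 else 0) :=
        sum_congr rfl fun A hA => sum_congr rfl fun B _ => hsubsets A hA B
    _ = ∑ R ∈ t.powersetCard s, (∑ A ∈ t.powersetCard k, if R ⊆ A then 1 else 0) *
          ∑ B ∈ t.powersetCard k, if R ⊆ B then 1 else 0 := by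
        simp_rw [sum_mul_sum]
        exact (sum_congr rfl fun _ _ => sum_comm).trans sum_comm
    _ = (#t).choose s * (#t - s).choose (k - s) ^ 2 := by
        rw [sum_congr rfl fun R hR => by rw [hsupersets R hR], sum_const, card_powersetCard,
          smul_eq_mul, sq]

theorem Finset.sum_sum_add_one_pow_card_inter {α R : Type*} [DecidableEq α] [CommSemiring R]
    (t : Finset α) (k : ℕ) (x : R) :
    ∑ A ∈ t.powersetCard k, ∑ B ∈ t.powersetCard k, (x + 1) ^ #(A ∩ B) =
      ∑ s ∈ range (k + 1), ((#t).choose s * (#t - s).choose (k - s) ^ 2 : ℕ) * x ^ s := by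
  calc ∑ A ∈ t.powersetCard k, ∑ B ∈ t.powersetCard k, (x + 1) ^ #(A ∩ B)
      = ∑ A ∈ t.powersetCard k, ∑ B ∈ t.powersetCard k, ∑ s ∈ range (k + 1),
          ((#(A ∩ B)).choose s : R) * x ^ s := by
        refine sum_congr rfl fun A hA => sum_congr rfl fun B _ => ?_
        refine add_one_pow_eq_sum_range_choose x ?_
        exact (card_le_card inter_subset_left).trans (mem_powersetCard.mp hA).2.le
    _ = ∑ s ∈ range (k + 1),
          ((∑ A ∈ t.powersetCard k, ∑ B ∈ t.powersetCard k, (#(A ∩ B)).choose s : ℕ) : R) *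
            x ^ s := by
        simp_rw [Nat.cast_sum, sum_mul]
        exact (sum_congr rfl fun _ _ => sum_comm).trans sum_comm
    _ = ∑ s ∈ range (k + 1), ((#t).choose s * (#t - s).choose (k - s) ^ 2 : ℕ) * x ^ s :=
        sum_congr rfl fun s hs => by
          rw [sum_sum_choose_card_inter t (Nat.lt_succ_iff.mp (mem_range.mp hs))]

theorem Finset.sum_sum_exp_mul_card_inter_le {α : Type*} [DecidableEq α] (t : Finset α)
    {k : ℕ} (ht : 0 < #t) (hk : k ≤ #t) {lam : ℝ} (hlam : 0 ≤ lam) :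
    ∑ A ∈ t.powersetCard k, ∑ B ∈ t.powersetCard k, Real.exp (lam * #(A ∩ B)) ≤
      (#t).choose k ^ 2 * Real.exp ((k : ℝ) ^ 2 / #t * (Real.exp lam - 1)) := by
  set μ : ℝ := (k : ℝ) ^ 2 / #t
  set x := Real.exp lam - 1
  have hx : 0 ≤ x := sub_nonneg.mpr (Real.one_le_exp hlam)
  have hexp : ∀ m : ℕ, Real.exp (lam * m) = (x + 1) ^ m := fun m => by
    rw [sub_add_cancel, mul_comm, Real.exp_nat_mul]
  simp_rw [hexp, sum_sum_add_one_pow_card_inter]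
  calc ∑ s ∈ range (k + 1), (((#t).choose s * (#t - s).choose (k - s) ^ 2 : ℕ) : ℝ) * x ^ s
      ≤ ∑ s ∈ range (k + 1), (#t).choose k ^ 2 * μ ^ s / s.factorial * x ^ s := by
        refine sum_le_sum fun s hs => mul_le_mul_of_nonneg_right ?_ (pow_nonneg hx s)
        push_cast
        exact Nat.choose_mul_choose_sub_sq_le ht hk (Nat.lt_succ_iff.mp (mem_range.mp hs))
    _ = (#t).choose k ^ 2 * ∑ s ∈ range (k + 1), (μ * x) ^ s / s.factorial := by
        rw [mul_sum]
        exact sum_congr rfl fun s _ => by rw [mul_pow]; ring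
    _ ≤ (#t).choose k ^ 2 * Real.exp (μ * x) := by
        gcongr
        exact Real.sum_le_exp_of_nonneg (by positivity) _

/-- MGF bound for the intersection of two independent uniform `k`-subsets of `[n]`:
with `H = |A ∩ B|`, for every `λ ≥ 0`,
`E[exp(λ(H - k²/n))] ≤ exp((k²/n)(e^λ - 1 - λ))`.
The expectation is written as an average over all pairs of `k`-subsets. -/
theorem stmt3 (n k : ℕ) (hn : 0 < n) (hk : k ≤ n) (lam : ℝ) (hlam : 0 ≤ lam) :
    (1 / ((n.choose k : ℝ)) ^ 2) *
        ∑ A ∈ Finset.powersetCard k (Finset.univ : Finset (Fin n)),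
          ∑ B ∈ Finset.powersetCard k (Finset.univ : Finset (Fin n)),
            Real.exp (lam * (((A ∩ B).card : ℝ) - (k : ℝ) ^ 2 / n)) ≤
      Real.exp ((k : ℝ) ^ 2 / n * (Real.exp lam - 1 - lam)) := by
  set μ : ℝ := (k : ℝ) ^ 2 / n
  have hN : (n.choose k : ℝ) ≠ 0 := by exact_mod_cast (Nat.choose_pos hk).ne'
  have hbound := sum_sum_exp_mul_card_inter_le (univ : Finset (Fin n)) (k := k)
    (by rwa [card_fin]) (by rwa [card_fin]) hlam
  rw [card_fin] at hbound
  calc 1 / (n.choose k : ℝ) ^ 2 * ∑ A ∈ powersetCard k univ, ∑ B ∈ powersetCard k univ,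
        Real.exp (lam * (#(A ∩ B) - μ))
      = Real.exp (-(lam * μ)) / (n.choose k : ℝ) ^ 2 *
          ∑ A ∈ powersetCard k univ, ∑ B ∈ powersetCard k univ, Real.exp (lam * #(A ∩ B)) := by
        simp_rw [mul_sub, Real.exp_sub, ← sum_div, Real.exp_neg]
        ring
    _ ≤ Real.exp (-(lam * μ)) / (n.choose k : ℝ) ^ 2 *
          ((n.choose k : ℝ) ^ 2 * Real.exp (μ * (Real.exp lam - 1))) :=
        mul_le_mul_of_nonneg_left hbound (by positivity)
    _ = Real.exp (μ * (Real.exp lam - 1 - lam)) := by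
        field_simp
        rw [← Real.exp_add]
        ring_nf
end

section
/- There exists a universal constant c > 0 such that for every integer n ≥ 1 and every r ∈ {0, 1, …, n}, the probability that a Binomial(n, r/n) random variable equals exactly r is at least c/√(r+1). -/
/-!
Write `k! = s_k √(2k) (k/e)^k`, where the Stirling sequence satisfies `√π ≤ s_k ≤ e/√2` for
`k ≥ 1`. For `0 < r < n` the exponential factors cancel exactly in
`C(n,r) (r/n)^r (1 - r/n)^(n-r)`, which therefore equals
`s_n / (s_r s_(n-r)) · √(n / (2 r (n-r)))`, and this is at least `√(2π)/e² · 1/√r`.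
For `r = 0` and `r = n` the probability is `1`.
-/

open Real Nat

namespace Stirling

lemma stirlingSeq_pos {n : ℕ} (hn : n ≠ 0) : 0 < stirlingSeq n :=
  (sqrt_pos.2 pi_pos).trans_le (sqrt_pi_le_stirlingSeq hn)

lemma stirlingSeq_le_exp_one_div_sqrt_two {n : ℕ} (hn : n ≠ 0) : stirlingSeq n ≤ exp 1 / √2 := by
  obtain ⟨k, rfl⟩ := exists_eq_succ_of_ne_zero hn
  simpa using stirlingSeq'_antitone (Nat.zero_le k)

lemma factorial_eq_stirlingSeq_mul {n : ℕ} (hn : n ≠ 0) :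
    (n ! : ℝ) = stirlingSeq n * (√(2 * n) * (n / exp 1) ^ n) := by
  have : √(2 * n : ℝ) * (n / exp 1) ^ n ≠ 0 := by positivity
  rw [stirlingSeq, div_mul_cancel₀ _ this]

end Stirling

open Stirling

lemma choose_mul_pow_mul_pow_eq_stirlingSeq {n r : ℕ} (hr : r ≠ 0) (hrn : r < n) :
    (n.choose r : ℝ) * (r / n) ^ r * (1 - r / n) ^ (n - r) =
      stirlingSeq n * √(2 * n) /
        (stirlingSeq r * √(2 * r) * (stirlingSeq (n - r) * √(2 * (n - r : ℕ)))) := by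
  have hn : n ≠ 0 := by omega
  have hm : n - r ≠ 0 := by omega
  have hsub : 1 - (r / n : ℝ) = (n - r : ℕ) / n := by
    rw [Nat.cast_sub hrn.le]; field_simp
  have hpow : (n / exp 1 : ℝ) ^ n = (n / exp 1) ^ r * (n / exp 1) ^ (n - r) := by
    rw [← pow_add, Nat.add_sub_cancel' hrn.le]
  rw [hsub, Nat.cast_choose ℝ hrn.le, factorial_eq_stirlingSeq_mul hn,
    factorial_eq_stirlingSeq_mul hr, factorial_eq_stirlingSeq_mul hm, hpow]
  simp only [div_pow]
  field_simp

lemma sqrt_two_pi_div_exp_two_div_sqrt_le {n r : ℕ} (hr : r ≠ 0) (hrn : r < n) :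
    √(2 * π) / exp 2 / √r ≤
      stirlingSeq n * √(2 * n) /
        (stirlingSeq r * √(2 * r) * (stirlingSeq (n - r) * √(2 * (n - r : ℕ)))) := by
  have hn : n ≠ 0 := by omega
  have hm : n - r ≠ 0 := by omega
  have hsn := stirlingSeq_pos hn
  have hsr := stirlingSeq_pos hr
  have hsm := stirlingSeq_pos hm
  calc √(2 * π) / exp 2 / √r
      = √π * √(2 * n) / (exp 1 / √2 * √(2 * r) * (exp 1 / √2 * √(2 * n))) := by
        have : (0 : ℝ) < √n := by positivity
        rw [show exp 2 = exp 1 ^ 2 by rw [← exp_nat_mul]; norm_num]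
        simp only [sqrt_mul' _ (Nat.cast_nonneg _), sqrt_mul zero_le_two π]
        field_simp
    _ ≤ √π * √(2 * n) / (exp 1 / √2 * √(2 * r) * (exp 1 / √2 * √(2 * (n - r : ℕ)))) := by
        gcongr
        exact Nat.sub_le n r
    _ ≤ _ := by
        gcongr
        · exact sqrt_pi_le_stirlingSeq hn
        · exact stirlingSeq_le_exp_one_div_sqrt_two hr
        · exact stirlingSeq_le_exp_one_div_sqrt_two hm

lemma sqrt_two_pi_le_exp_two : √(2 * π) ≤ exp 2 := by
  have := add_one_le_exp 2
  exact sqrt_le_iff.2 ⟨by positivity, by nlinarith [pi_le_four]⟩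

/-- Binomial point-mass anti-concentration: there is a universal constant `c > 0` such that
for every `n ≥ 1` and `r ∈ {0,…,n}`, `P(Bin(n, r/n) = r) ≥ c/√(r+1)`. -/
theorem stmt5 : ∃ c : ℝ, 0 < c ∧ ∀ n : ℕ, 1 ≤ n → ∀ r : ℕ, r ≤ n →
    c / Real.sqrt ((r : ℝ) + 1) ≤
      (n.choose r : ℝ) * ((r : ℝ) / n) ^ r * (1 - (r : ℝ) / n) ^ (n - r) := by
  set c := √(2 * π) / exp 2
  have hc : c ≤ 1 := (div_le_one (exp_pos 2)).2 sqrt_two_pi_le_exp_two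
  refine ⟨c, by positivity, fun n _ r hrn => ?_⟩
  obtain rfl | hr := eq_or_ne r 0
  · simpa using hc
  obtain rfl | hrn := hrn.eq_or_lt
  · have : c / √(r + 1) ≤ c := div_le_self (by positivity) (one_le_sqrt.2 (by simp))
    simpa [div_self (by positivity : (r : ℝ) ≠ 0)] using this.trans hc
  calc c / √(r + 1) ≤ c / √r := by gcongr; simp
    _ ≤ _ := sqrt_two_pi_div_exp_two_div_sqrt_le hr hrn
    _ = _ := (choose_mul_pow_mul_pow_eq_stirlingSeq hr hrn).symm
end

section
/- Suppose X_1,…,X_n, X_1',…,X_n' are independent with X_i' identically distributed to X_i for every i. Let X = (X_1,…,X_n) and X^(i) be X with coordinate i replaced by X_i'. If f : 𝒳^n → ℝ^d is measurable with E‖f(X)‖² < ∞, then E[‖f(X) - E f(X)‖²] ≤ (1/2) Σ_{i=1}^n E[‖f(X) - f(X^(i))‖²]. -/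
/-!
Let `p = (X, X')` and let `swapCoords s p` exchange the coordinates of `X` and `X'` indexed by `s`;
it preserves the law of `p`. Write `Z_s` for the first component of `swapCoords s p`, so `Z_∅ = X`,
`Z_univ = X'` and `Z_{i} = X⁽ⁱ⁾`. Then `Var g(X) = E[g(X) g(Z_∅)] - E[g(X) g(Z_univ)]` telescopes
along any enumeration of the coordinates. For `i ∉ s`, put `v = g(Z_s) - g(Z_{s ∪ {i}})`: swapping
coordinate `i` negates `v`, so `2 E[g(X) v] = E[(g(X) - g(X⁽ⁱ⁾)) v]`, while swapping the coordinates
in `s` carries `v` to `g(X) - g(X⁽ⁱ⁾)`, so both have the same `L²` norm and AM–GM bounds each step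
by `E[(g(X) - g(X⁽ⁱ⁾))²] / 2`. The vector case is the sum of the coordinate inequalities.
-/

open MeasureTheory ProbabilityTheory Finset
open scoped symmDiff

theorem integral_mul_le_half_integral_sq_sub {Ω : Type*} [MeasurableSpace Ω] {π : Measure Ω}
    {σ τ : Ω → Ω} (hσ : MeasurePreserving σ π π) (hσ' : MeasurableEmbedding σ)
    (hτ : MeasurePreserving τ π π) (hτ' : MeasurableEmbedding τ)
    {h v : Ω → ℝ} (hh : MemLp h 2 π) (hv : MemLp v 2 π)
    (hvσ : ∀ ω, v (σ ω) = -v ω) (hvτ : ∀ ω, v (τ ω) = h ω - h (σ ω)) :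
    ∫ ω, h ω * v ω ∂π ≤ 1 / 2 * ∫ ω, (h ω - h (σ ω)) ^ 2 ∂π := by
  have hhσ : MemLp (fun ω => h (σ ω)) 2 π := hh.comp_measurePreserving hσ
  have hu : MemLp (fun ω => h ω - h (σ ω)) 2 π := hh.sub hhσ
  have hantisymm : ∫ ω, h (σ ω) * v ω ∂π = -∫ ω, h ω * v ω ∂π := calc
    ∫ ω, h (σ ω) * v ω ∂π = ∫ ω, -(h (σ ω) * v (σ ω)) ∂π := by
      simp only [hvσ, mul_neg, neg_neg]
    _ = ∫ ω, -(h ω * v ω) ∂π := hσ.integral_comp hσ' fun ω => -(h ω * v ω)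
    _ = -∫ ω, h ω * v ω ∂π := integral_neg _
  have hnorm : ∫ ω, v ω ^ 2 ∂π = ∫ ω, (h ω - h (σ ω)) ^ 2 ∂π := by
    simp only [← hvτ]
    exact (hτ.integral_comp hτ' fun ω => v ω ^ 2).symm
  have hcross : ∫ ω, (h ω - h (σ ω)) * v ω ∂π = 2 * ∫ ω, h ω * v ω ∂π := by
    simp only [sub_mul]
    rw [integral_sub (f := fun ω => h ω * v ω) (g := fun ω => h (σ ω) * v ω)
      (hh.integrable_mul hv) (hhσ.integrable_mul hv), hantisymm]
    ring
  have hamgm : ∫ ω, (h ω - h (σ ω)) * v ω ∂π ≤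
      (∫ ω, (h ω - h (σ ω)) ^ 2 ∂π + ∫ ω, v ω ^ 2 ∂π) / 2 := by
    rw [← integral_add hu.integrable_sq hv.integrable_sq, ← integral_div]
    refine integral_mono (hu.integrable_mul hv)
      ((hu.integrable_sq.add hv.integrable_sq).div_const 2) fun ω => ?_
    nlinarith [sq_nonneg (h ω - h (σ ω) - v ω)]
  linarith

section SwapCoords

variable {ι α : Type*} [DecidableEq ι]

def swapCoords (s : Finset ι) (p : (ι → α) × (ι → α)) : (ι → α) × (ι → α) :=
  (s.piecewise p.2 p.1, s.piecewise p.1 p.2)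

@[simp] lemma swapCoords_empty (p : (ι → α) × (ι → α)) : swapCoords ∅ p = p := by
  simp [swapCoords]

lemma swapCoords_swapCoords (s t : Finset ι) (p : (ι → α) × (ι → α)) :
    swapCoords t (swapCoords s p) = swapCoords (s ∆ t) p := by
  ext k <;> by_cases hs : k ∈ s <;> by_cases ht : k ∈ t <;>
    simp [swapCoords, Finset.piecewise, hs, ht, mem_symmDiff]

lemma swapCoords_involutive (s : Finset ι) : Function.Involutive (swapCoords (α := α) s) :=
  fun p => by rw [swapCoords_swapCoords, symmDiff_self, bot_eq_empty, swapCoords_empty]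

lemma fst_swapCoords_univ [Fintype ι] (p : (ι → α) × (ι → α)) : (swapCoords univ p).1 = p.2 :=
  piecewise_univ _ _

lemma fst_swapCoords_singleton (i : ι) (p : (ι → α) × (ι → α)) :
    (swapCoords {i} p).1 = Function.update p.1 i (p.2 i) :=
  piecewise_singleton _ _ _

lemma measurable_swapCoords [MeasurableSpace α] (s : Finset ι) :
    Measurable (swapCoords (α := α) s) := by
  refine .prodMk (measurable_pi_lambda _ fun k => ?_) (measurable_pi_lambda _ fun k => ?_) <;>
    by_cases hk : k ∈ s <;> simp only [piecewise, hk, if_true, if_false] <;> fun_prop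

lemma measurableEmbedding_swapCoords [MeasurableSpace α] (s : Finset ι) :
    MeasurableEmbedding (swapCoords (α := α) s) :=
  (MeasurableEquiv.ofInvolutive _ (swapCoords_involutive s)
    (measurable_swapCoords s)).measurableEmbedding

variable [Fintype ι] [MeasurableSpace α] {ν : ι → Measure α} [∀ i, SigmaFinite (ν i)]

lemma measurePreserving_swapCoords (s : Finset ι) :
    MeasurePreserving (swapCoords s) ((Measure.pi ν).prod (Measure.pi ν))
      ((Measure.pi ν).prod (Measure.pi ν)) := by
  have e := measurePreserving_arrowProdEquivProdArrow α α ι ν ν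
  have hswap : MeasurePreserving
      (fun (a : ι → α × α) i => (if i ∈ s then Prod.swap else id) (a i))
      (Measure.pi fun i => (ν i).prod (ν i)) (Measure.pi fun i => (ν i).prod (ν i)) :=
    measurePreserving_pi _ _ fun i => by
      split_ifs
      exacts [Measure.measurePreserving_swap, .id _]
  convert (e.comp hswap).comp e.symm using 1
  funext p
  ext k <;> by_cases hk : k ∈ s <;>
    simp [swapCoords, hk, MeasurableEquiv.arrowProdEquivProdArrow, Equiv.arrowProdEquivProdArrow]

end SwapCoords

section EfronStein

variable {ι 𝒳 : Type*} [DecidableEq ι] [Fintype ι] [MeasurableSpace 𝒳]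
  {ν : ι → Measure 𝒳} [∀ i, IsProbabilityMeasure (ν i)] {g : (ι → 𝒳) → ℝ}

lemma memLp_comp_fst_swapCoords (hg : MemLp g 2 (Measure.pi ν)) (s : Finset ι) :
    MemLp (fun p => g (swapCoords s p).1) 2 ((Measure.pi ν).prod (Measure.pi ν)) :=
  hg.comp_measurePreserving (measurePreserving_fst.comp (measurePreserving_swapCoords s))

lemma memLp_sub_comp_update (hg : MemLp g 2 (Measure.pi ν)) (i : ι) :
    MemLp (fun p => g p.1 - g (Function.update p.1 i (p.2 i))) 2
      ((Measure.pi ν).prod (Measure.pi ν)) := by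
  have h := (memLp_comp_fst_swapCoords hg ∅).sub (memLp_comp_fst_swapCoords hg {i})
  simp only [swapCoords_empty, fst_swapCoords_singleton] at h
  exact h

lemma integral_mul_comp_swapCoords_sub_insert_le (hg : MemLp g 2 (Measure.pi ν))
    {s : Finset ι} {i : ι} (hi : i ∉ s) :
    ∫ p, g p.1 * g (swapCoords s p).1 ∂(Measure.pi ν).prod (Measure.pi ν) -
        ∫ p, g p.1 * g (swapCoords (insert i s) p).1 ∂(Measure.pi ν).prod (Measure.pi ν) ≤
      1 / 2 * ∫ p, (g p.1 - g (swapCoords {i} p).1) ^ 2 ∂(Measure.pi ν).prod (Measure.pi ν) := by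
  have hgs := memLp_comp_fst_swapCoords hg
  have hg₁ : MemLp (fun p : (ι → 𝒳) × (ι → 𝒳) => g p.1) 2
      ((Measure.pi ν).prod (Measure.pi ν)) := by simpa using hgs ∅
  have hint : ∀ t, Integrable (fun p => g p.1 * g (swapCoords t p).1)
      ((Measure.pi ν).prod (Measure.pi ν)) := fun t => hg₁.integrable_mul (hgs t)
  rw [← integral_sub (hint s) (hint (insert i s))]
  simp only [← mul_sub]
  refine integral_mul_le_half_integral_sq_sub (measurePreserving_swapCoords {i})
    (measurableEmbedding_swapCoords {i}) (measurePreserving_swapCoords s)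
    (measurableEmbedding_swapCoords s) hg₁ ((hgs s).sub (hgs (insert i s))) (fun p => ?_)
    fun p => ?_
  · have h₁ : {i} ∆ s = insert i s := by ext; grind [mem_symmDiff]
    have h₂ : {i} ∆ insert i s = s := by ext; grind [mem_symmDiff]
    simp only [swapCoords_swapCoords, h₁, h₂, neg_sub]
  · have h₁ : s ∆ insert i s = {i} := by ext; grind [mem_symmDiff]
    simp only [swapCoords_swapCoords, symmDiff_self, bot_eq_empty, swapCoords_empty, h₁]

lemma integral_sq_sub_integral_mul_comp_swapCoords_le (hg : MemLp g 2 (Measure.pi ν))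
    (s : Finset ι) :
    ∫ p, g p.1 ^ 2 ∂(Measure.pi ν).prod (Measure.pi ν) -
        ∫ p, g p.1 * g (swapCoords s p).1 ∂(Measure.pi ν).prod (Measure.pi ν) ≤
      1 / 2 * ∑ i ∈ s,
        ∫ p, (g p.1 - g (swapCoords {i} p).1) ^ 2 ∂(Measure.pi ν).prod (Measure.pi ν) := by
  induction s using Finset.induction_on with
  | empty => simp [pow_two]
  | insert i s hi ih =>
    rw [sum_insert hi, mul_add]
    linarith [integral_mul_comp_swapCoords_sub_insert_le hg hi]

theorem variance_le_half_sum_integral_sq_sub_update (hg : MemLp g 2 (Measure.pi ν)) :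
    variance g (Measure.pi ν) ≤ 1 / 2 * ∑ i,
      ∫ p, (g p.1 - g (Function.update p.1 i (p.2 i))) ^ 2 ∂(Measure.pi ν).prod (Measure.pi ν) := by
  have h := integral_sq_sub_integral_mul_comp_swapCoords_le hg univ
  simp only [fst_swapCoords_univ, fst_swapCoords_singleton, integral_prod_mul] at h
  rw [integral_fun_fst (fun x => g x ^ 2), probReal_univ, one_smul] at h
  rw [variance_eq_sub hg, sq (∫ x, g x ∂_)]
  exact h

end EfronStein

lemma memLp_two_apply_of_integrable_sum_sq {Ω ι : Type*} [MeasurableSpace Ω] [Fintype ι]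
    {μ : Measure Ω} {f : Ω → ι → ℝ} (hf : AEStronglyMeasurable f μ)
    (hf2 : Integrable (fun x => ∑ j, f x j ^ 2) μ) (j : ι) : MemLp (fun x => f x j) 2 μ := by
  have hfj := (continuous_apply j).comp_aestronglyMeasurable hf
  refine (memLp_two_iff_integrable_sq hfj).2 <| hf2.mono' (hfj.pow 2) <| .of_forall fun x => ?_
  rw [Real.norm_of_nonneg (sq_nonneg _)]
  exact single_le_sum (fun j _ => sq_nonneg (f x j)) (mem_univ j)

/-- Vector Efron–Stein inequality: for `X = (X_1,…,X_n)` with independent coordinates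
`X_i ∼ ν i` and independent copies `X_i' ∼ ν i`, and measurable `f : 𝒳^n → ℝ^d` with
`E‖f(X)‖² < ∞` (Euclidean norm, written as a sum of squares of coordinates),
`E‖f(X) - E f(X)‖² ≤ (1/2) Σ_i E‖f(X) - f(X^{(i)})‖²`. -/
theorem stmt8 {𝒳 : Type*} [MeasurableSpace 𝒳] (n d : ℕ)
    (ν : Fin n → Measure 𝒳) (hν : ∀ i, IsProbabilityMeasure (ν i))
    (f : (Fin n → 𝒳) → (Fin d → ℝ)) (hf : Measurable f)
    (hf2 : Integrable (fun x => ∑ j, (f x j) ^ 2) (Measure.pi ν)) :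
    (∫ x, ∑ j, (f x j - ∫ y, f y j ∂(Measure.pi ν)) ^ 2 ∂(Measure.pi ν)) ≤
      (1 / 2) * ∑ i : Fin n,
        ∫ p : (Fin n → 𝒳) × (Fin n → 𝒳),
          ∑ j, (f p.1 j - f (Function.update p.1 i (p.2 i)) j) ^ 2
          ∂((Measure.pi ν).prod (Measure.pi ν)) := by
  have hcoord := memLp_two_apply_of_integrable_sum_sq hf.aestronglyMeasurable hf2
  calc (∫ x, ∑ j, (f x j - ∫ y, f y j ∂(Measure.pi ν)) ^ 2 ∂(Measure.pi ν))
      = ∑ j, variance (fun x => f x j) (Measure.pi ν) := by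
        have hdev : ∀ j, Integrable (fun x => (f x j - ∫ y, f y j ∂(Measure.pi ν)) ^ 2)
            (Measure.pi ν) := fun j => ((hcoord j).sub (memLp_const _)).integrable_sq
        rw [integral_finsetSum _ fun j _ => hdev j]
        exact sum_congr rfl fun j _ => (variance_eq_integral (hcoord j).aemeasurable).symm
    _ ≤ ∑ j, 1 / 2 * ∑ i, ∫ p, (f p.1 j - f (Function.update p.1 i (p.2 i)) j) ^ 2
          ∂((Measure.pi ν).prod (Measure.pi ν)) :=
        sum_le_sum fun j _ => variance_le_half_sum_integral_sq_sub_update (hcoord j)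
    _ = _ := by
        rw [← mul_sum, sum_comm]
        congr 1
        exact sum_congr rfl fun i _ => (integral_finsetSum _ fun j _ =>
          (memLp_sub_comp_update (hcoord j) i).integrable_sq).symm
end

section
/- Let f : (ℝ^d)^n → ℝ^d be measurable and satisfy sup_{μ ∈ ℝ^d} E_{X ∼ N(μ, I_d)^⊗n} ‖f(X) - μ‖² ≤ C_MSE · d/n. Suppose a scalar averaging principle holds: there is a probability measure ν on ℝ and constant c_sc > 0 such that every scalar statistic g(Z_1,…,Z_n, W) of n i.i.d. N(θ,1) samples plus independent auxiliary randomness W (whose law is independent of θ) with sup_θ E[(g-θ)²] ≤ C_MSE·d/n satisfies ∫ Var_θ(g) dν(θ) ≥ c_sc/n. Then there exists μ* ∈ ℝ^d with Var_{μ*}(f) := E‖f(X) - E f(X)‖² ≥ c_sc · d/n. -/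
/-!
Fix a coordinate `j` and the other mean coordinates. Resampling the `j`-th coordinate of every
observation from `N(θ, 1)` and keeping the remaining coordinates as auxiliary randomness turns
`f_j` into a scalar statistic whose law under `θ` is that of `f_j` under the mean `update μ j θ`,
so the scalar principle bounds the `ν`-average over `θ` of `Var(f_j)` by `c_sc/n`. Integrating the
other mean coordinates against `ν` (Fubini) and summing over `j` gives
`∫ ∑_j Var_μ(f_j) dν^⊗d(μ) ≥ c_sc d/n`, so some `μ` does at least as well as the average.
-/

open MeasureTheory ProbabilityTheory Function Set

theorem MeasureTheory.MeasurePreserving.integral_comp_of_aestronglyMeasurable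
    {α β : Type*} [MeasurableSpace α] [MeasurableSpace β] {μ : Measure α} {ν : Measure β}
    {T : α → β} (hT : MeasurePreserving T μ ν) {g : β → ℝ}
    (hg : AEStronglyMeasurable g ν) :
    ∫ x, g (T x) ∂μ = ∫ y, g y ∂ν := by
  rw [← hT.map_eq] at hg ⊢
  exact (integral_map hT.aemeasurable hg).symm

instance isProbabilityMeasure_update {ι α : Type*} [DecidableEq ι] [MeasurableSpace α]
    (m : ι → Measure α) [∀ k, IsProbabilityMeasure (m k)]
    (j : ι) (κ : Measure α) [IsProbabilityMeasure κ] (k : ι) :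
    IsProbabilityMeasure (update m j κ k) := by
  rcases eq_or_ne k j with rfl | hk
  · rwa [update_self]
  · rw [update_of_ne hk]; infer_instance

section UpdatePi

variable {ι α : Type*} [Fintype ι] [DecidableEq ι] [MeasurableSpace α]

theorem measurePreserving_update_prod_pi (m : ι → Measure α) [∀ k, IsProbabilityMeasure (m k)]
    (j : ι) (κ : Measure α) [IsProbabilityMeasure κ] :
    MeasurePreserving (fun p : α × (ι → α) => update p.2 j p.1)
      (κ.prod (Measure.pi m)) (Measure.pi (update m j κ)) := by
  have hmeas : Measurable fun p : α × (ι → α) => update p.2 j p.1 := by fun_prop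
  refine ⟨hmeas, (Measure.pi_eq fun s hs => ?_).symm⟩
  have hpre : (fun p : α × (ι → α) => update p.2 j p.1) ⁻¹' univ.pi s
      = s j ×ˢ univ.pi (update s j univ) := by
    ext ⟨t, x⟩
    simp only [mem_preimage, mem_pi, mem_univ, forall_const, mem_prod]
    rw [forall_update_iff (p := fun i a => a ∈ s i),
      forall_update_iff (p := fun i A => x i ∈ A)]
    simp
  rw [Measure.map_apply hmeas (.univ_pi hs), hpre, Measure.prod_prod, Measure.pi_pi,
    Fintype.prod_eq_mul_prod_compl j, Fintype.prod_eq_mul_prod_compl j]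
  simp only [update_self, measure_univ, one_mul]
  refine congr_arg _ (Finset.prod_congr rfl fun i hi => ?_)
  rw [Finset.mem_compl, Finset.mem_singleton] at hi
  simp [update_of_ne hi]

theorem measurePreserving_update_prod_pi_self (m : ι → Measure α)
    [∀ k, IsProbabilityMeasure (m k)] (j : ι) :
    MeasurePreserving (fun p : α × (ι → α) => update p.2 j p.1)
      ((m j).prod (Measure.pi m)) (Measure.pi m) := by
  simpa using measurePreserving_update_prod_pi m j (m j)

section

variable {m : ι → Measure α} [∀ k, IsProbabilityMeasure (m k)] {V : (ι → α) → ℝ}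

theorem MeasureTheory.Integrable.comp_update_prod (hV : Integrable V (.pi m)) (j : ι) :
    Integrable (fun p : α × (ι → α) => V (update p.2 j p.1)) ((m j).prod (.pi m)) :=
  ((measurePreserving_update_prod_pi_self m j).integrable_comp hV.aestronglyMeasurable).2 hV

theorem MeasureTheory.Integrable.integral_update (hV : Integrable V (.pi m)) (j : ι) :
    Integrable (fun x => ∫ t, V (update x j t) ∂m j) (.pi m) :=
  (hV.comp_update_prod j).integral_prod_right

theorem integral_pi_eq_integral_integral_update (hV : Integrable V (.pi m)) (j : ι) :
    ∫ x, V x ∂.pi m = ∫ x, ∫ t, V (update x j t) ∂m j ∂.pi m :=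
  calc ∫ x, V x ∂.pi m = ∫ p, V (update p.2 j p.1) ∂(m j).prod (.pi m) :=
        ((measurePreserving_update_prod_pi_self m j).integral_comp_of_aestronglyMeasurable
          hV.aestronglyMeasurable).symm
    _ = ∫ x, ∫ t, V (update x j t) ∂m j ∂.pi m :=
        integral_prod_symm _ (hV.comp_update_prod j)

end

theorem exists_card_mul_le_sum_of_le_integral_update (m : ι → Measure α)
    [∀ k, IsProbabilityMeasure (m k)] {V : ι → (ι → α) → ℝ}
    (hV : ∀ j, Integrable (V j) (.pi m)) {c : ℝ}
    (hc : ∀ j x, c ≤ ∫ t, V j (update x j t) ∂m j) :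
    ∃ x, Fintype.card ι * c ≤ ∑ j, V j x := by
  have hle : ∀ j, c ≤ ∫ x, V j x ∂.pi m := fun j => by
    rw [integral_pi_eq_integral_integral_update (hV j) j]
    simpa using integral_mono (integrable_const c) ((hV j).integral_update j) (hc j)
  obtain ⟨x, hx⟩ := exists_integral_le (integrable_finsetSum _ fun j _ => hV j)
  refine ⟨x, le_trans ?_ hx⟩
  rw [integral_finsetSum _ fun j _ => hV j]
  calc Fintype.card ι * c = ∑ _j : ι, c := by simp
    _ ≤ _ := Finset.sum_le_sum fun j _ => hle j

end UpdatePi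

theorem measurable_variance_of_measurable_uncurry {α β : Type*} [MeasurableSpace α]
    [MeasurableSpace β] {Q : Measure β} [SFinite Q] {F : α → β → ℝ}
    (hF : Measurable (uncurry F)) :
    Measurable fun a => variance (F a) Q := by
  have hmean : Measurable fun a => ∫ x, F a x ∂Q :=
    hF.stronglyMeasurable.integral_prod_right'.measurable
  refine (Measurable.lintegral_prod_right' (ν := Q) (f := fun p : α × β =>
    ‖F p.1 p.2 - ∫ x, F p.1 x ∂Q‖ₑ ^ 2) ?_).ennreal_toReal
  exact ((hF.sub (hmean.comp measurable_fst)).enorm).pow_const 2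

theorem MeasureTheory.MeasurePreserving.pi_prod_pi {S α β γ : Type*} [Fintype S]
    [MeasurableSpace α] [MeasurableSpace β] [MeasurableSpace γ]
    {μ : Measure α} {ν : Measure β} {ρ : Measure γ}
    [SigmaFinite μ] [SigmaFinite ν] [SigmaFinite ρ]
    {T : α × β → γ} (hT : MeasurePreserving T (μ.prod ν) ρ) :
    MeasurePreserving (fun p : (S → α) × (S → β) => fun s => T (p.1 s, p.2 s))
      ((Measure.pi fun _ => μ).prod (Measure.pi fun _ => ν)) (Measure.pi fun _ => ρ) :=
  (measurePreserving_pi _ _ fun _ => hT).comp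
    (measurePreserving_arrowProdEquivProdArrow α β S _ _).symm

theorem variance_le_integral_sq_sub {Ω : Type*} [MeasurableSpace Ω] {P : Measure Ω}
    [IsProbabilityMeasure P] {X : Ω → ℝ} (hX : AEStronglyMeasurable X P) (c : ℝ) :
    variance X P ≤ ∫ ω, (X ω - c) ^ 2 ∂P := by
  rw [← variance_sub_const hX c]
  exact variance_le_expectation_sq (hX.sub aestronglyMeasurable_const)

theorem integrable_sq_of_integrable_sum_sq {Ω ι : Type*} [MeasurableSpace Ω] [Fintype ι]
    {P : Measure Ω} {Y : ι → Ω → ℝ} (hY : ∀ j, AEStronglyMeasurable (Y j) P)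
    (h : Integrable (fun ω => ∑ j, Y j ω ^ 2) P) (j : ι) :
    Integrable (fun ω => Y j ω ^ 2) P :=
  h.mono' ((hY j).pow 2) (ae_of_all _ fun ω => by
    rw [Real.norm_of_nonneg (sq_nonneg _)]
    exact Finset.single_le_sum (f := fun k => Y k ω ^ 2) (fun _ _ => sq_nonneg _)
      (Finset.mem_univ j))

noncomputable def gaussianSample (n d : ℕ) (μ : Fin d → ℝ) :
    Measure (Fin n → Fin d → ℝ) :=
  Measure.pi fun _ : Fin n => Measure.pi fun k => gaussianReal (μ k) 1

instance (n d : ℕ) (μ : Fin d → ℝ) : IsProbabilityMeasure (gaussianSample n d μ) := by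
  unfold gaussianSample; infer_instance

namespace gaussianSample

variable {n d : ℕ}

/-- The remaining coordinates play the role of the auxiliary randomness `W`, whose law does not
depend on `θ`. -/
theorem measurePreserving_update (j : Fin d) (θ : ℝ) (μ : Fin d → ℝ) :
    MeasurePreserving (fun p : (Fin n → ℝ) × (Fin n → Fin d → ℝ) => fun s =>
        update (p.2 s) j (p.1 s))
      ((Measure.pi fun _ => gaussianReal θ 1).prod (gaussianSample n d μ))
      (gaussianSample n d (update μ j θ)) := by
  have h := (measurePreserving_update_prod_pi (fun k => gaussianReal (μ k) 1) j
    (gaussianReal θ 1)).pi_prod_pi (S := Fin n)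
  rwa [← funext (apply_update (fun _ m => gaussianReal m 1) μ j θ)] at h

theorem measurePreserving_add (μ : Fin d → ℝ) :
    MeasurePreserving (fun x : Fin n → Fin d → ℝ => fun s => x s + μ)
      (gaussianSample n d 0) (gaussianSample n d μ) := by
  have h : ∀ k, MeasurePreserving (· + μ k) (gaussianReal 0 1) (gaussianReal (μ k) 1) :=
    fun k => ⟨measurable_add_const _, by rw [gaussianReal_map_add_const, zero_add]⟩
  exact measurePreserving_pi _ _ fun _ => measurePreserving_pi _ _ h

/-- Shifting by `μ` moves the dependence on `μ` from the measure into the integrand. -/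
theorem measurable_variance {F : (Fin n → Fin d → ℝ) → ℝ} (hF : Measurable F) :
    Measurable fun μ => variance F (gaussianSample n d μ) := by
  have h : ∀ μ, variance F (gaussianSample n d μ) =
      variance (fun x => F fun s => x s + μ) (gaussianSample n d 0) := fun μ =>
    ((measurePreserving_add μ).variance_fun_comp hF.aemeasurable).symm
  simp_rw [h]
  exact measurable_variance_of_measurable_uncurry (by fun_prop)

end gaussianSample

/-- `B` stands for the paper's MSE budget `C_MSE · d / n`. -/
def ScalarAveragingPrinciple (n : ℕ) (ν : Measure ℝ) (c B : ℝ) : Prop :=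
  ∀ (W : Type) (_ : MeasurableSpace W) (ρ : Measure W), IsProbabilityMeasure ρ →
    ∀ g : (Fin n → ℝ) × W → ℝ, Measurable g →
    (∀ θ : ℝ, Integrable (fun z => (g z - θ) ^ 2)
      ((Measure.pi fun _ : Fin n => gaussianReal θ 1).prod ρ)) →
    (∀ θ : ℝ,
      ∫ z, (g z - θ) ^ 2 ∂(Measure.pi fun _ : Fin n => gaussianReal θ 1).prod ρ ≤ B) →
    c / n ≤ ∫ θ, variance g ((Measure.pi fun _ : Fin n => gaussianReal θ 1).prod ρ) ∂ν

section Estimator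

variable {n d : ℕ} {f : (Fin n → Fin d → ℝ) → Fin d → ℝ} (hf : Measurable f)
  (hint : ∀ μ, Integrable (fun x => ∑ j, (f x j - μ j) ^ 2) (gaussianSample n d μ))
include hf hint

theorem integrable_sq_sub_coord (μ : Fin d → ℝ) (j : Fin d) :
    Integrable (fun x => (f x j - μ j) ^ 2) (gaussianSample n d μ) :=
  integrable_sq_of_integrable_sum_sq (Y := fun j x => f x j - μ j) (fun _ => by fun_prop)
    (hint μ) j

theorem memLp_coord (μ : Fin d → ℝ) (j : Fin d) :
    MemLp (fun x => f x j) 2 (gaussianSample n d μ) := by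
  have h : MemLp (fun x => f x j - μ j) 2 (gaussianSample n d μ) :=
    (memLp_two_iff_integrable_sq (by fun_prop)).2 (integrable_sq_sub_coord hf hint μ j)
  convert h.add (memLp_const (μ j)) using 1
  ext x
  simp

theorem integral_sum_sq_sub_integral (μ : Fin d → ℝ) :
    ∫ x, ∑ j, (f x j - ∫ y, f y j ∂gaussianSample n d μ) ^ 2 ∂gaussianSample n d μ =
      ∑ j, variance (fun x => f x j) (gaussianSample n d μ) := by
  have hsq : ∀ j, Integrable (fun x => (f x j - ∫ y, f y j ∂gaussianSample n d μ) ^ 2)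
      (gaussianSample n d μ) := fun j =>
    ((memLp_coord hf hint μ j).sub (memLp_const _)).integrable_sq
  rw [integral_finsetSum _ fun j _ => hsq j]
  exact Finset.sum_congr rfl fun j _ => (variance_eq_integral (by fun_prop)).symm

variable {B : ℝ} (hmse : ∀ μ, ∫ x, ∑ j, (f x j - μ j) ^ 2 ∂gaussianSample n d μ ≤ B)
include hmse

theorem integral_sq_sub_coord_le (μ : Fin d → ℝ) (j : Fin d) :
    ∫ x, (f x j - μ j) ^ 2 ∂gaussianSample n d μ ≤ B :=
  (integral_mono (integrable_sq_sub_coord hf hint μ j) (hint μ) fun x =>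
    Finset.single_le_sum (f := fun k => (f x k - μ k) ^ 2) (fun _ _ => sq_nonneg _)
      (Finset.mem_univ j)).trans (hmse μ)

theorem variance_coord_le (μ : Fin d → ℝ) (j : Fin d) :
    variance (fun x => f x j) (gaussianSample n d μ) ≤ B :=
  (variance_le_integral_sq_sub (by fun_prop) (μ j)).trans
    (integral_sq_sub_coord_le hf hint hmse μ j)

theorem integrable_variance_coord (ν : Measure (Fin d → ℝ)) [IsFiniteMeasure ν] (j : Fin d) :
    Integrable (fun μ => variance (fun x => f x j) (gaussianSample n d μ)) ν :=
  .of_bound (gaussianSample.measurable_variance (by fun_prop)).aestronglyMeasurable B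
    (ae_of_all _ fun μ => by
      rw [Real.norm_of_nonneg (variance_nonneg _ _)]
      exact variance_coord_le hf hint hmse μ j)

theorem le_integral_variance_coord_update {ν : Measure ℝ} {c : ℝ}
    (hsc : ScalarAveragingPrinciple n ν c B) (j : Fin d) (μ : Fin d → ℝ) :
    c / n ≤ ∫ θ, variance (fun x => f x j) (gaussianSample n d (update μ j θ)) ∂ν := by
  have hT := fun θ => gaussianSample.measurePreserving_update (n := n) j θ μ
  refine (hsc _ _ (gaussianSample n d μ) inferInstance
    (fun p => f (fun s => update (p.2 s) j (p.1 s)) j) (by fun_prop) (fun θ => ?_)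
    (fun θ => ?_)).trans_eq (integral_congr_ae (ae_of_all _ fun θ => ?_))
  · refine (hT θ).integrable_comp_of_integrable (g := fun x => (f x j - θ) ^ 2) ?_
    simpa using integrable_sq_sub_coord hf hint (update μ j θ) j
  · rw [(hT θ).integral_comp_of_aestronglyMeasurable (g := fun x => (f x j - θ) ^ 2)
      (by fun_prop)]
    simpa using integral_sq_sub_coord_le hf hint hmse (update μ j θ) j
  · exact (hT θ).variance_fun_comp (f := fun x => f x j) (by fun_prop)

end Estimator

theorem stmt12_general (n d : ℕ) (CMSE csc : ℝ)
    (ν : Measure ℝ) [IsProbabilityMeasure ν]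
    (hsc : ∀ (W : Type) (mW : MeasurableSpace W) (ρ : Measure W),
      IsProbabilityMeasure ρ →
      ∀ g : ((Fin n → ℝ) × W) → ℝ, Measurable g →
      (∀ θ : ℝ, Integrable (fun z => (g z - θ) ^ 2)
        ((Measure.pi fun _ : Fin n => gaussianReal θ 1).prod ρ)) →
      (∀ θ : ℝ, (∫ z, (g z - θ) ^ 2
        ∂((Measure.pi fun _ : Fin n => gaussianReal θ 1).prod ρ)) ≤ CMSE * d / n) →
      csc / n ≤ ∫ θ, variance g
        ((Measure.pi fun _ : Fin n => gaussianReal θ 1).prod ρ) ∂ν)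
    (f : (Fin n → (Fin d → ℝ)) → (Fin d → ℝ)) (hf : Measurable f)
    (hfint : ∀ μ : Fin d → ℝ, Integrable (fun x => ∑ j, (f x j - μ j) ^ 2)
      (Measure.pi fun _ : Fin n => Measure.pi fun j => gaussianReal (μ j) 1))
    (hmse : ∀ μ : Fin d → ℝ, (∫ x, ∑ j, (f x j - μ j) ^ 2
      ∂(Measure.pi fun _ : Fin n => Measure.pi fun j => gaussianReal (μ j) 1)) ≤
        CMSE * d / n) :
    ∃ μ : Fin d → ℝ,
      csc * d / n ≤
        ∫ x, ∑ j, (f x j -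
            ∫ y, f y j ∂(Measure.pi fun _ : Fin n =>
              Measure.pi fun j' => gaussianReal (μ j') 1)) ^ 2
          ∂(Measure.pi fun _ : Fin n => Measure.pi fun j => gaussianReal (μ j) 1) := by
  obtain ⟨μ, hμ⟩ := exists_card_mul_le_sum_of_le_integral_update (fun _ : Fin d => ν)
    (integrable_variance_coord hf hfint hmse _)
    (le_integral_variance_coord_update hf hfint hmse hsc)
  refine ⟨μ, ?_⟩
  rw [Fintype.card_fin] at hμ
  calc csc * d / n = d * (csc / n) := by ring
    _ ≤ _ := hμ
    _ = _ := (integral_sum_sq_sub_integral hf hfint μ).symm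

/-- Scalar-to-vector variance lifting principle. Suppose `f : (ℝ^d)^n → ℝ^d` is uniformly
MSE-accurate: `sup_μ E_{N(μ,I_d)^⊗n}‖f(X) - μ‖² ≤ C_MSE·d/n`, and suppose the scalar
averaging principle holds for a probability measure `ν` on `ℝ` and constant `c_sc > 0`:
every measurable scalar statistic `g(Z, W)` of `n` i.i.d. `N(θ,1)` samples `Z` together with
independent auxiliary randomness `W ∼ ρ` (whose law does not depend on `θ`), satisfying
`sup_θ E[(g-θ)²] ≤ C_MSE·d/n`, has `∫ Var_θ(g) dν(θ) ≥ c_sc/n`. Then there exists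
`μ* ∈ ℝ^d` with `Var_{μ*}(f) = E‖f(X) - E f(X)‖² ≥ c_sc·d/n`.
(Euclidean norms are written as sums of squares of coordinates.) -/
theorem stmt12 (n d : ℕ) (hn : 0 < n) (hd : 0 < d)
    (CMSE csc : ℝ) (hC : 0 < CMSE) (hcsc : 0 < csc)
    (ν : Measure ℝ) [IsProbabilityMeasure ν]
    (hsc : ∀ (W : Type) (mW : MeasurableSpace W) (ρ : Measure W),
      IsProbabilityMeasure ρ →
      ∀ g : ((Fin n → ℝ) × W) → ℝ, Measurable g →
      (∀ θ : ℝ, Integrable (fun z => (g z - θ) ^ 2)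
        ((Measure.pi fun _ : Fin n => gaussianReal θ 1).prod ρ)) →
      (∀ θ : ℝ, (∫ z, (g z - θ) ^ 2
        ∂((Measure.pi fun _ : Fin n => gaussianReal θ 1).prod ρ)) ≤ CMSE * d / n) →
      csc / n ≤ ∫ θ, variance g
        ((Measure.pi fun _ : Fin n => gaussianReal θ 1).prod ρ) ∂ν)
    (f : (Fin n → (Fin d → ℝ)) → (Fin d → ℝ)) (hf : Measurable f)
    (hfint : ∀ μ : Fin d → ℝ, Integrable (fun x => ∑ j, (f x j - μ j) ^ 2)
      (Measure.pi fun _ : Fin n => Measure.pi fun j => gaussianReal (μ j) 1))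
    (hmse : ∀ μ : Fin d → ℝ, (∫ x, ∑ j, (f x j - μ j) ^ 2
      ∂(Measure.pi fun _ : Fin n => Measure.pi fun j => gaussianReal (μ j) 1)) ≤
        CMSE * d / n) :
    ∃ μ : Fin d → ℝ,
      csc * d / n ≤
        ∫ x, ∑ j, (f x j -
            ∫ y, f y j ∂(Measure.pi fun _ : Fin n =>
              Measure.pi fun j' => gaussianReal (μ j') 1)) ^ 2
          ∂(Measure.pi fun _ : Fin n => Measure.pi fun j => gaussianReal (μ j) 1) :=
  stmt12_general n d CMSE csc ν hsc f hf hfint hmse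
end

section
/- Let f : {0,1}^n → ℝ satisfy sup_{p ∈ [0,1]} E_{X ∼ Bern(p)^⊗n} |f(X) - p| ≤ C/√n for a constant C > 0. Then for every η ∈ (0,1) with k = ⌊ηn⌋ ≥ 1 and all sufficiently large n (depending on C), there is a universal constant c > 0 such that sup_{p ∈ [0,1]} E_{X ∼ Bern(p)^⊗n}[S_η^f(X)] ≥ c·η, where S_η^f(x) := sup over y ∈ {0,1}^n with d_H(x,y) ≤ ⌊ηn⌋ of |f(y) - f(x)|. -/
/-!
Evaluating the accuracy hypothesis at `p = 0` and `p = 1` gives `f ⊤ - f ⊥ ≥ 1/2` once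
`√n ≥ 4C`. Averaging `E_p[S]` over a uniform `p ∈ [0,1]` turns it into the average over
`r = 0, …, n` of `b r`, the mean of `S` on the layer of weight `r`, because
`∫₀¹ p^r (1-p)^(n-r) dp = 1 / ((n+1) C(n,r))`. Coupling two layers `r ≤ r' ≤ r + k` through the
pairs `x ≤ y` (a biregular bipartite graph) shows that the layer means `a` of `f` satisfy
`a r' - a r ≤ min (b r) (b r')`. Telescoping along the arithmetic progressions of step `k` then
gives `k (a n - a 0) ≤ 2 ∑ b`, hence an average sensitivity of at least `k/(4(n+1)) ≥ η/16`.
-/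

open scoped Classical

open Finset
open scoped BigOperators

namespace Finset

variable {α β K : Type*} [Semifield K] [CharZero K]

lemma expect_expect_bipartiteAbove (r : α → β → Prop) [∀ a b, Decidable (r a b)]
    {s : Finset α} {t : Finset β} {m m' : ℕ} (hm : ∀ a ∈ s, #(t.bipartiteAbove r a) = m)
    (hm' : ∀ b ∈ t, #(s.bipartiteBelow r b) = m') (hm'0 : m' ≠ 0) (g : β → K) :
    𝔼 a ∈ s, 𝔼 b ∈ t.bipartiteAbove r a, g b = 𝔼 b ∈ t, g b := by
  have hcard : (#s * m : K) = #t * m' := by exact_mod_cast card_mul_eq_card_mul r hm hm'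
  have hsum : ∑ a ∈ s, ∑ b ∈ t.bipartiteAbove r a, g b = m' * ∑ b ∈ t, g b := by
    rw [sum_sum_bipartiteAbove_eq_sum_sum_bipartiteBelow, mul_sum]
    refine sum_congr rfl fun b hb => ?_
    rw [sum_const, hm' b hb, nsmul_eq_mul]
  simp only [expect_eq_sum_div_card]
  rw [sum_congr rfl fun a ha => by rw [hm a ha], ← sum_div, hsum, div_div, mul_comm (m : K),
    hcard]
  rcases (#t).eq_zero_or_pos with ht | ht
  · simp [ht]
  · field_simp

end Finset

lemma mul_sub_le_two_mul_sum_of_increment_le {a b : ℕ → ℝ} {n ℓ : ℕ} (hℓ : ℓ ≤ n)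
    (hb : ∀ r, 0 ≤ b r)
    (hleft : ∀ r r', r ≤ r' → r' ≤ n → r' ≤ r + ℓ → a r' - a r ≤ b r)
    (hright : ∀ r r', r ≤ r' → r' ≤ n → r' ≤ r + ℓ → a r' - a r ≤ b r') :
    ℓ * (a n - a 0) ≤ 2 * ∑ r ∈ range (n + 1), b r := by
  -- Both sides are the double sum over `r < n`, `i < ℓ` of the unit increments
  -- `a (min (r + i + 1) n) - a (min (r + i) n)`, telescoped in `r` resp. in `i`.
  have htelescope : ∑ i ∈ range ℓ, (a n - a i) = ∑ r ∈ range n, (a (min (r + ℓ) n) - a r) := by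
    have hrow : ∀ i ∈ range ℓ, a n - a i =
        ∑ r ∈ range n, (a (min (r + 1 + i) n) - a (min (r + i) n)) := fun i hi => by
      rw [sum_range_sub (fun r => a (min (r + i) n))]
      simp only [mem_range] at hi
      congr 2 <;> omega
    have hcol : ∀ r ∈ range n, a (min (r + ℓ) n) - a r =
        ∑ i ∈ range ℓ, (a (min (r + (i + 1)) n) - a (min (r + i) n)) := fun r hr => by
      rw [sum_range_sub (fun i => a (min (r + i) n))]
      simp only [mem_range] at hr
      congr 2; omega
    rw [sum_congr rfl hrow, sum_congr rfl hcol, sum_comm]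
    refine sum_congr rfl fun r _ => sum_congr rfl fun i _ => ?_
    rw [add_right_comm, add_assoc]
  have hsplit : ℓ * (a n - a 0) = ∑ i ∈ range ℓ, (a n - a i) + ∑ i ∈ range ℓ, (a i - a 0) := by
    rw [← sum_add_distrib]; simp [mul_sub]
  have hfar : ∑ r ∈ range n, (a (min (r + ℓ) n) - a r) ≤ ∑ r ∈ range (n + 1), b r := by
    calc _ ≤ ∑ r ∈ range n, b r := sum_le_sum fun r hr => by
            simp only [mem_range] at hr; exact hleft _ _ (by omega) (by omega) (by omega)
      _ ≤ _ := sum_le_sum_of_subset_of_nonneg (by simp) fun r _ _ => hb r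
  have hnear : ∑ i ∈ range ℓ, (a i - a 0) ≤ ∑ r ∈ range (n + 1), b r := by
    calc _ ≤ ∑ i ∈ range ℓ, b i := sum_le_sum fun i hi => by
            simp only [mem_range] at hi; exact hright _ _ (by omega) (by omega) (by omega)
      _ ≤ _ := sum_le_sum_of_subset_of_nonneg (by simp; omega) fun r _ _ => hb r
  linarith

lemma integral_pow_mul_one_sub_pow_succ (r m : ℕ) :
    (r + 1 : ℝ) * ∫ p in (0 : ℝ)..1, p ^ r * (1 - p) ^ (m + 1) =
      (m + 1) * ∫ p in (0 : ℝ)..1, p ^ (r + 1) * (1 - p) ^ m := by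
  have hderiv : ∀ p ∈ Set.uIcc (0 : ℝ) 1, HasDerivAt (fun p => p ^ (r + 1) * (1 - p) ^ (m + 1))
      ((r + 1) * (p ^ r * (1 - p) ^ (m + 1)) - (m + 1) * (p ^ (r + 1) * (1 - p) ^ m)) p := by
    intro p _
    refine ((hasDerivAt_pow (r + 1) p).fun_mul
      (((hasDerivAt_id' p).const_sub 1).fun_pow (m + 1))).congr_deriv ?_
    simp only [Nat.add_sub_cancel]
    push_cast
    ring
  have hftc : ∫ p in (0 : ℝ)..1,
      ((r + 1) * (p ^ r * (1 - p) ^ (m + 1)) - (m + 1) * (p ^ (r + 1) * (1 - p) ^ m)) = 0 := by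
    rw [intervalIntegral.integral_eq_sub_of_hasDerivAt hderiv
      (Continuous.intervalIntegrable (by fun_prop) _ _)]
    simp
  rwa [intervalIntegral.integral_sub (Continuous.intervalIntegrable (by fun_prop) _ _)
    (Continuous.intervalIntegrable (by fun_prop) _ _), intervalIntegral.integral_const_mul,
    intervalIntegral.integral_const_mul, sub_eq_zero] at hftc

lemma integral_pow_mul_one_sub_pow (r m : ℕ) :
    ∫ p in (0 : ℝ)..1, p ^ r * (1 - p) ^ m = ((r + m + 1 : ℝ) * (r + m).choose r)⁻¹ := by
  induction m generalizing r with
  | zero => simp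
  | succ m ih =>
    have h := integral_pow_mul_one_sub_pow_succ r m
    rw [ih, show r + 1 + m = r + (m + 1) by omega] at h
    have hchoose : ((r + (m + 1)).choose (r + 1) : ℝ) * (r + 1) =
        (r + (m + 1)).choose r * (m + 1) := by
      exact_mod_cast (Nat.choose_succ_right_eq _ r).trans
        (by rw [show r + (m + 1) - r = m + 1 by omega])
    have hpos : (0 : ℝ) < (r + (m + 1)).choose r := by
      exact_mod_cast Nat.choose_pos (by omega)
    have hpos' : (0 : ℝ) < (r + (m + 1)).choose (r + 1) := by
      exact_mod_cast Nat.choose_pos (by omega)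
    apply mul_left_cancel₀ (show (r + 1 : ℝ) ≠ 0 by positivity)
    rw [h]
    push_cast
    field_simp
    linear_combination (-(r + m + 2 : ℝ)) * hchoose

lemma exists_mem_Icc_integral_le {g : ℝ → ℝ} (hg : Continuous g) :
    ∃ p ∈ Set.Icc (0 : ℝ) 1, ∫ q in (0 : ℝ)..1, g q ≤ g p := by
  obtain ⟨p, hp, h⟩ := MeasureTheory.exists_setAverage_le (μ := MeasureTheory.volume)
    (s := Set.Icc (0 : ℝ) 1) (by simp) (by simp) hg.integrableOn_Icc
  refine ⟨p, hp, ?_⟩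
  rw [intervalIntegral.integral_of_le zero_le_one, ← MeasureTheory.integral_Icc_eq_integral_Ioc]
  simpa [MeasureTheory.setAverage_eq] using h

namespace BoolCube

open Fintype (card)

variable {ι : Type*} [Fintype ι]

def weight (x : ι → Bool) : ℕ := #{i | x i}

lemma weight_le_card (x : ι → Bool) : weight x ≤ card ι := card_filter_le _ _

lemma card_filter_not (x : ι → Bool) : #{i | ¬ x i} = card ι - weight x := by
  rw [← card_univ, ← card_filter_add_card_filter_not (s := univ) (fun i => x i = true), weight]
  omega

lemma weight_compl (x : ι → Bool) : weight xᶜ = card ι - weight x := by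
  rw [← card_filter_not, weight]
  simp

lemma weight_eq_zero_iff {x : ι → Bool} : weight x = 0 ↔ x = ⊥ := by
  simp [weight, funext_iff]

lemma weight_eq_card_iff {x : ι → Bool} : weight x = card ι ↔ x = ⊤ := by
  rw [← compl_eq_bot, ← weight_eq_zero_iff, weight_compl]
  have := weight_le_card x
  omega

lemma filter_subset_filter_iff_le {x y : ι → Bool} :
    ({i | x i} : Finset ι) ⊆ ({i | y i} : Finset ι) ↔ x ≤ y := by
  simp [subset_iff, Pi.le_def, Bool.le_iff_imp]

lemma hammingDist_eq_weight_sub {x y : ι → Bool} (h : x ≤ y) :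
    hammingDist x y = weight y - weight x := by
  rw [weight, weight, ← card_sdiff_of_subset (filter_subset_filter_iff_le.2 h), hammingDist]
  congr 1
  ext i
  have := h i
  simp only [mem_filter, mem_univ, true_and, mem_sdiff]
  revert this
  cases x i <;> cases y i <;> simp

noncomputable def sensitivity (f : (ι → Bool) → ℝ) (k : ℕ) (x : ι → Bool) : ℝ :=
  ⨆ y : {y // hammingDist x y ≤ k}, |f y - f x|

lemma abs_sub_le_sensitivity {f : (ι → Bool) → ℝ} {k : ℕ} {x y : ι → Bool}
    (h : hammingDist x y ≤ k) : |f y - f x| ≤ sensitivity f k x :=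
  le_ciSup (f := fun y : {y // hammingDist x y ≤ k} => |f y - f x|)
    (Set.finite_range _).bddAbove ⟨y, h⟩

lemma sensitivity_nonneg (f : (ι → Bool) → ℝ) (k : ℕ) (x : ι → Bool) :
    0 ≤ sensitivity f k x := by
  have h := abs_sub_le_sensitivity (f := f) (x := x) (y := x) (k := k) (by simp)
  rwa [sub_self, abs_zero] at h

def bernoulliProb (p : ℝ) (x : ι → Bool) : ℝ := ∏ i, if x i then p else 1 - p

lemma bernoulliProb_eq (p : ℝ) (x : ι → Bool) :
    bernoulliProb p x = p ^ weight x * (1 - p) ^ (card ι - weight x) := by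
  rw [bernoulliProb, prod_ite, prod_const, prod_const, ← card_filter_not, weight]

@[fun_prop]
lemma continuous_bernoulliProb (x : ι → Bool) : Continuous fun p => bernoulliProb p x := by
  simp only [bernoulliProb_eq]
  fun_prop

lemma integral_bernoulliProb (x : ι → Bool) :
    ∫ p in (0 : ℝ)..1, bernoulliProb p x =
      ((card ι + 1 : ℝ) * (card ι).choose (weight x))⁻¹ := by
  simp only [bernoulliProb_eq]
  rw [integral_pow_mul_one_sub_pow, ← Nat.cast_add, Nat.add_sub_cancel' (weight_le_card x)]

variable [DecidableEq ι]

lemma sum_bernoulliProb_zero_mul (g : (ι → Bool) → ℝ) :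
    ∑ x, bernoulliProb 0 x * g x = g ⊥ := by
  rw [Fintype.sum_eq_single ⊥ fun x hx => by
    rw [bernoulliProb_eq, zero_pow (weight_eq_zero_iff.not.2 hx), zero_mul, zero_mul]]
  simp [bernoulliProb]

lemma sum_bernoulliProb_one_mul (g : (ι → Bool) → ℝ) :
    ∑ x, bernoulliProb 1 x * g x = g ⊤ := by
  refine (Fintype.sum_eq_single ⊤ fun x hx => ?_).trans (by simp [bernoulliProb])
  have hw : card ι - weight x ≠ 0 := by
    have := weight_le_card x
    have := weight_eq_card_iff.not.2 hx
    omega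
  rw [bernoulliProb_eq, sub_self, zero_pow hw, mul_zero, zero_mul]

variable (ι) in
def layer (r : ℕ) : Finset (ι → Bool) := {x | weight x = r}

lemma mem_layer {x : ι → Bool} {r : ℕ} : x ∈ layer ι r ↔ weight x = r := by simp [layer]

lemma card_filter_layer_le (y : ι → Bool) (r : ℕ) :
    #{x ∈ layer ι r | x ≤ y} = (weight y).choose r := by
  rw [weight, ← card_powersetCard]
  refine card_nbij' (fun x => ({i | x i} : Finset ι)) (fun s i => decide (i ∈ s)) ?_ ?_ ?_ ?_
  · intro x hx
    simp only [coe_filter, mem_layer, Set.mem_ofPred_eq, mem_coe, mem_powersetCard] at hx ⊢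
    exact ⟨filter_subset_filter_iff_le.2 hx.2, hx.1⟩
  · intro s hs
    simp only [coe_filter, mem_layer, Set.mem_ofPred_eq, mem_coe, mem_powersetCard] at hs ⊢
    rw [← filter_subset_filter_iff_le, weight]
    simpa using hs.symm
  · intro x _
    ext i
    simp
  · intro s _
    ext i
    simp

lemma card_layer (r : ℕ) : #(layer ι r) = (card ι).choose r := by
  have h := card_filter_layer_le (ι := ι) ⊤ r
  rwa [weight_eq_card_iff.2 rfl, filter_true_of_mem fun x _ => le_top] at h

lemma card_filter_layer_ge (x : ι → Bool) {r : ℕ} (hr : r ≤ card ι) :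
    #{y ∈ layer ι r | x ≤ y} = (card ι - weight x).choose (card ι - r) := by
  rw [← weight_compl, ← card_filter_layer_le]
  refine card_nbij' compl compl ?_ ?_ (fun y _ => compl_compl y) (fun y _ => compl_compl y)
  · intro y hy
    simp only [coe_filter, mem_layer, Set.mem_ofPred_eq] at hy ⊢
    exact ⟨by rw [weight_compl, hy.1], compl_le_compl hy.2⟩
  · intro y hy
    simp only [coe_filter, mem_layer, Set.mem_ofPred_eq] at hy ⊢
    have := weight_le_card y
    exact ⟨by rw [weight_compl]; omega, le_compl_comm.1 hy.2⟩

lemma layer_zero : layer ι 0 = {⊥} := by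
  ext x
  simp [mem_layer, weight_eq_zero_iff]

lemma layer_card : layer ι (card ι) = {⊤} := by
  ext x
  simp [mem_layer, weight_eq_card_iff]

lemma integral_sum_bernoulliProb_mul (g : (ι → Bool) → ℝ) :
    ∫ p in (0 : ℝ)..1, ∑ x, bernoulliProb p x * g x =
      (∑ r ∈ range (card ι + 1), 𝔼 x ∈ layer ι r, g x) / (card ι + 1) := by
  rw [intervalIntegral.integral_finsetSum fun x _ =>
    Continuous.intervalIntegrable (by fun_prop) _ _]
  simp only [intervalIntegral.integral_mul_const, integral_bernoulliProb]
  rw [← sum_fiberwise_of_maps_to (g := weight) (t := range (card ι + 1))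
    fun x _ => mem_range.2 (Nat.lt_succ_of_le (weight_le_card x)), sum_div]
  refine sum_congr rfl fun r _ => ?_
  rw [expect_eq_sum_div_card, card_layer, div_div, sum_div]
  refine sum_congr rfl fun x hx => ?_
  rw [(mem_filter.1 hx).2]
  ring

lemma expect_layer_sub_le_expect_sensitivity (f : (ι → Bool) → ℝ) {k r r' : ℕ} (hr : r ≤ r')
    (hr' : r' ≤ card ι) (hk : r' ≤ r + k) :
    𝔼 y ∈ layer ι r', f y - 𝔼 x ∈ layer ι r, f x ≤ 𝔼 x ∈ layer ι r, sensitivity f k x ∧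
      𝔼 y ∈ layer ι r', f y - 𝔼 x ∈ layer ι r, f x ≤ 𝔼 y ∈ layer ι r', sensitivity f k y := by
  have hup : ∀ x ∈ layer ι r, #{y ∈ layer ι r' | x ≤ y} = (card ι - r).choose (card ι - r') :=
    fun x hx => by rw [card_filter_layer_ge x hr', mem_layer.1 hx]
  have hdown : ∀ y ∈ layer ι r', #{x ∈ layer ι r | x ≤ y} = r'.choose r :=
    fun y hy => by rw [card_filter_layer_le, mem_layer.1 hy]
  have hdist : ∀ x ∈ layer ι r, ∀ y ∈ layer ι r', x ≤ y → hammingDist x y ≤ k :=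
    fun x hx y hy hxy => by
      rw [hammingDist_eq_weight_sub hxy, mem_layer.1 hx, mem_layer.1 hy]; omega
  constructor
  · rw [← expect_expect_bipartiteAbove (· ≤ ·) hup hdown (Nat.choose_pos hr).ne',
      sub_le_iff_le_add, ← expect_add_distrib]
    refine expect_le_expect fun x hx => expect_le ?_ fun y hy => ?_
    · exact card_pos.1 <| (Nat.choose_pos (by omega)).trans_eq (hup x hx).symm
    · obtain ⟨hy, hxy⟩ := mem_filter.1 hy
      linarith [le_abs_self (f y - f x), abs_sub_le_sensitivity (f := f) (hdist x hx y hy hxy)]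
  · rw [← expect_expect_bipartiteAbove (fun y x => x ≤ y) hdown hup
      (Nat.choose_pos (by omega)).ne', sub_le_iff_le_add, ← expect_add_distrib]
    refine expect_le_expect fun y hy => ?_
    rw [← sub_le_iff_le_add']
    refine le_expect ?_ fun x hx => ?_
    · exact card_pos.1 <| (Nat.choose_pos hr).trans_eq (hdown y hy).symm
    · obtain ⟨hx, hxy⟩ := mem_filter.1 hx
      have hyx := hammingDist_comm x y ▸ hdist x hx y hy hxy
      linarith [neg_abs_le (f x - f y), abs_sub_le_sensitivity (f := f) hyx]

lemma mul_sub_le_two_mul_sum_expect_sensitivity (f : (ι → Bool) → ℝ) {k : ℕ}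
    (hk : k ≤ card ι) :
    k * (f ⊤ - f ⊥) ≤ 2 * ∑ r ∈ range (card ι + 1), 𝔼 x ∈ layer ι r, sensitivity f k x := by
  have h := mul_sub_le_two_mul_sum_of_increment_le (a := fun r => 𝔼 x ∈ layer ι r, f x) hk
    (fun r => expect_nonneg fun x _ => sensitivity_nonneg f k x)
    (fun _ _ hr hr' hk => (expect_layer_sub_le_expect_sensitivity f hr hr' hk).1)
    (fun _ _ hr hr' hk => (expect_layer_sub_le_expect_sensitivity f hr hr' hk).2)
  simpa [layer_zero, layer_card] using h

theorem exists_le_sum_bernoulliProb_mul_sensitivity (f : (ι → Bool) → ℝ) {k : ℕ}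
    (hk : k ≤ card ι) :
    ∃ p ∈ Set.Icc (0 : ℝ) 1,
      k * (f ⊤ - f ⊥) / (2 * (card ι + 1)) ≤ ∑ x, bernoulliProb p x * sensitivity f k x := by
  obtain ⟨p, hp, hle⟩ := exists_mem_Icc_integral_le
    (g := fun p => ∑ x, bernoulliProb p x * sensitivity f k x) (by fun_prop)
  refine ⟨p, hp, le_trans ?_ hle⟩
  rw [integral_sum_bernoulliProb_mul, mul_comm, ← div_div]
  gcongr
  linarith [mul_sub_le_two_mul_sum_expect_sensitivity f hk]

end BoolCube

theorem stmt16_general (C : ℝ) :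
    ∃ c : ℝ, 0 < c ∧ ∃ N : ℕ, ∀ n : ℕ, N ≤ n →
    ∀ f : (Fin n → Bool) → ℝ,
    (∀ p : ℝ, p ∈ Set.Icc (0 : ℝ) 1 →
      (∑ x : Fin n → Bool, (∏ i, if x i then p else 1 - p) * |f x - p|) ≤
        C / Real.sqrt n) →
    ∀ η : ℝ, η ∈ Set.Ioo (0 : ℝ) 1 → 1 ≤ ⌊η * n⌋₊ →
    ∃ p ∈ Set.Icc (0 : ℝ) 1,
      c * η ≤ ∑ x : Fin n → Bool, (∏ i, if x i then p else 1 - p) *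
        (⨆ y : {y : Fin n → Bool // hammingDist x y ≤ ⌊η * n⌋₊}, |f y.1 - f x|) := by
  refine ⟨1 / 16, by norm_num, ⌈16 * C ^ 2⌉₊, fun n hn f hf η ⟨hη0, hη1⟩ hk => ?_⟩
  have hηn : 1 ≤ η * n := (Nat.one_le_floor_iff _).1 hk
  have hsqrt : 4 * C ≤ √n := Real.le_sqrt_of_sq_le (by linarith [Nat.ceil_le.1 hn])
  have hacc : C / √n ≤ 1 / 4 := by
    rw [div_le_iff₀ (Real.sqrt_pos.2 (by nlinarith))]
    linarith
  have h0 : |f ⊥ - 0| ≤ C / √n :=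
    (BoolCube.sum_bernoulliProb_zero_mul _).symm.trans_le (hf 0 ⟨le_rfl, zero_le_one⟩)
  have h1 : |f ⊤ - 1| ≤ C / √n :=
    (BoolCube.sum_bernoulliProb_one_mul _).symm.trans_le (hf 1 ⟨zero_le_one, le_rfl⟩)
  have hgap : 1 / 2 ≤ f ⊤ - f ⊥ := by
    linarith [(abs_le.1 h0).2, (abs_le.1 h1).1]
  have hkn : ⌊η * n⌋₊ ≤ Fintype.card (Fin n) := by
    rw [Fintype.card_fin]
    exact Nat.floor_le_of_le (by nlinarith)
  obtain ⟨p, hp, hle⟩ := BoolCube.exists_le_sum_bernoulliProb_mul_sensitivity f hkn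
  refine ⟨p, hp, le_trans ?_ hle⟩
  rw [Fintype.card_fin, le_div_iff₀ (by positivity)]
  nlinarith [Nat.div_two_lt_floor hηn]

/-- Empirical sensitivity lower bound for Bernoulli mean estimation: if
`sup_{p∈[0,1]} E_{Bern(p)^⊗n}|f(X) - p| ≤ C/√n`, then there is a constant `c > 0`
(depending only on `C`) such that for all sufficiently large `n`, every `η ∈ (0,1)` with
`⌊ηn⌋ ≥ 1` satisfies `sup_{p∈[0,1]} E_{Bern(p)^⊗n}[S_η^f(X)] ≥ c·η`, where
`S_η^f(x) = sup_{y : d_H(x,y) ≤ ⌊ηn⌋} |f(y) - f(x)|`. Expectations over `Bern(p)^⊗n`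
are written as explicit finite sums. -/
theorem stmt16 (C : ℝ) (hC : 0 < C) :
    ∃ c : ℝ, 0 < c ∧ ∃ N : ℕ, ∀ n : ℕ, N ≤ n →
    ∀ f : (Fin n → Bool) → ℝ,
    (∀ p : ℝ, p ∈ Set.Icc (0 : ℝ) 1 →
      (∑ x : Fin n → Bool, (∏ i, if x i then p else 1 - p) * |f x - p|) ≤
        C / Real.sqrt n) →
    ∀ η : ℝ, η ∈ Set.Ioo (0 : ℝ) 1 → 1 ≤ ⌊η * n⌋₊ →
    ∃ p ∈ Set.Icc (0 : ℝ) 1,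
      c * η ≤ ∑ x : Fin n → Bool, (∏ i, if x i then p else 1 - p) *
        (⨆ y : {y : Fin n → Bool // hammingDist x y ≤ ⌊η * n⌋₊}, |f y.1 - f x|) :=
  stmt16_general C
end
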